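/- arXiv:2108.11816 — 2 statements merged into one kernel-verified Lean document; each statement's English description precedes it below -/
import Mathlib

section
/- For a multigraph G and a pair of functions g, h : V(G) → ℕ ∪ {∞}, G is (g,h)-orientable if and only if (1) d(v) ≤ g(v) + h(v) for every vertex v of G, and (2) e(S) ≤ min{g(S), h(S)} for every vertex subset S ⊆ V(G). -/
open Classical

noncomputable section

namespace MG

variable {V : Type} {E : Type} [Fintype V] [Fintype E] [DecidableEq V]

/-- The number of times vertex `v` occurs as an endpoint of the unordered pair `s`
(so a loop at `v` counts twice). -/
def mult (v : V) (s : Sym2 V) : ℕ :=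
  Sym2.lift ⟨fun a b => (if a = v then 1 else 0) + (if b = v then 1 else 0),
    fun _ _ => add_comm _ _⟩ s

/-- The degree of a vertex in the multigraph whose edges `E` have endpoints given
by `ends` (loops count twice). -/
def degree (ends : E → Sym2 V) (v : V) : ℕ := ∑ e : E, mult v (ends e)

/-- Maximum degree `Δ(G)`. -/
def maxDegree (ends : E → Sym2 V) : ℕ := Finset.univ.sup fun v => degree ends v

/-- `e(S)`: the number of edges with all endpoints in `S`. -/
def edgesWithin (ends : E → Sym2 V) (S : Finset V) : ℕ :=
  (Finset.univ.filter fun e => ∀ v ∈ ends e, v ∈ S).card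

/-- The degree of `v` in the subgraph induced by `S`. -/
def degreeIn (ends : E → Sym2 V) (S : Finset V) (v : V) : ℕ :=
  ∑ e ∈ Finset.univ.filter (fun e => ∀ u ∈ ends e, u ∈ S), mult v (ends e)

/-- Adjacency; a vertex with a loop is adjacent to itself. -/
def Adj (ends : E → Sym2 V) (u v : V) : Prop := ∃ e, ends e = s(u, v)

/-- The multigraph has no loops. -/
def Loopless (ends : E → Sym2 V) : Prop := ∀ e, ¬ (ends e).IsDiag

/-- Reachability by walks. -/
def Reaches (ends : E → Sym2 V) (u v : V) : Prop :=
  Relation.ReflTransGen (Adj ends) u v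

/-- The connected component of `v`, as a set of vertices. -/
def component (ends : E → Sym2 V) (v : V) : Finset V :=
  Finset.univ.filter fun u => Reaches ends v u

/-- A pseudoforest: every connected component contains at most one cycle
(a loop counts as a cycle); equivalently, every connected component has at
most as many edges as vertices. -/
def IsPseudoforest (ends : E → Sym2 V) : Prop :=
  ∀ v : V, edgesWithin ends (component ends v) ≤ (component ends v).card

/-- A forest (acyclic multigraph): every connected component has strictly fewer
edges than vertices. -/
def IsForest (ends : E → Sym2 V) : Prop :=
  ∀ v : V, edgesWithin ends (component ends v) + 1 ≤ (component ends v).card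

/-- An orientation assigns to each edge an ordered pair of its endpoints
(tail, head). -/
def IsOrientation (ends : E → Sym2 V) (D : E → V × V) : Prop :=
  ∀ e, Sym2.mk (D e).1 (D e).2 = ends e

/-- Indegree of `v` under the orientation `D`. -/
def inDeg (D : E → V × V) (v : V) : ℕ := (Finset.univ.filter fun e => (D e).2 = v).card

/-- Outdegree of `v` under the orientation `D`. -/
def outDeg (D : E → V × V) (v : V) : ℕ := (Finset.univ.filter fun e => (D e).1 = v).card

/-- `G` is `(g,h)`-orientable: there is an orientation in which every vertex `v`
has indegree at most `g v` and outdegree at most `h v`. -/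
def GHOrientable (ends : E → Sym2 V) (g h : V → ℕ∞) : Prop :=
  ∃ D : E → V × V, IsOrientation ends D ∧
    (∀ v, (inDeg D v : ℕ∞) ≤ g v) ∧ (∀ v, (outDeg D v : ℕ∞) ≤ h v)

/-- `(g,h)` is a valid pair of functions for `G`. -/
def ValidPair (ends : E → Sym2 V) (g h : V → ℕ∞) : Prop :=
  (∀ v : V, 1 ≤ g v + h v) ∧
  (∀ u v : V, Adj ends u v → 1 ≤ g u + g v) ∧
  (∀ u v : V, Adj ends u v → 1 ≤ h u + h v)

/-- The endpoint map of the subgraph consisting of the edges satisfying `P`. -/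
def subEnds (ends : E → Sym2 V) (P : E → Prop) : {e // P e} → Sym2 V :=
  fun e => ends e.val

/-- A `(g,h)`-oriented-coloring: each color class is a `(g,h)`-orientable subgraph. -/
def GHColoring (ends : E → Sym2 V) (g h : V → ℕ∞) {k : ℕ} (C : E → Fin k) : Prop :=
  ∀ c : Fin k, GHOrientable (subEnds ends fun e => C e = c) g h

/-- The `(g,h)`-oriented chromatic index `χ'_{(g,h)}(G)`. -/
def ghChromaticIndex (ends : E → Sym2 V) (g h : V → ℕ∞) : ℕ :=
  sInf {k | ∃ C : E → Fin k, GHColoring ends g h C}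

/-- Ceiling division `⌈a/b⌉` on ℕ. -/
def cdiv (a b : ℕ) : ℕ := (a + b - 1) / b

/-- Replace `∞` values of `g` by the maximum degree `Δ(G)`. -/
def trunc (ends : E → Sym2 V) (g : V → ℕ∞) (v : V) : ℕ :=
  (g v).untopD (maxDegree ends)

/-- The weighted maximum degree `Δ_{(g,h)}(G) = max_v ⌈d(v)/(g(v)+h(v))⌉`
(values `∞` of `g, h` replaced by `Δ(G)`). -/
def ghMaxDegree (ends : E → Sym2 V) (g h : V → ℕ∞) : ℕ :=
  Finset.univ.sup fun v => cdiv (degree ends v) (trunc ends g v + trunc ends h v)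

/-- The weighted maximum density
`W_{(g,h)}(G) = max_{S, g(S) ≥ 1, h(S) ≥ 1} ⌈e(S)/min{g(S),h(S)}⌉`
(values `∞` of `g, h` replaced by `Δ(G)`). -/
def ghMaxDensity (ends : E → Sym2 V) (g h : V → ℕ∞) : ℕ :=
  (Finset.univ.filter fun S : Finset V =>
      (1 ≤ ∑ v ∈ S, g v) ∧ (1 ≤ ∑ v ∈ S, h v)).sup
    fun S => cdiv (edgesWithin ends S)
      (min (∑ v ∈ S, trunc ends g v) (∑ v ∈ S, trunc ends h v))

/-- An edge-coloring into pseudoforests. -/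
def PaColoring (ends : E → Sym2 V) {k : ℕ} (C : E → Fin k) : Prop :=
  ∀ c : Fin k, IsPseudoforest (subEnds ends fun e => C e = c)

/-- The pseudoarboricity `pa(G)`. -/
def pa (ends : E → Sym2 V) : ℕ := sInf {k | ∃ C : E → Fin k, PaColoring ends C}

/-- An edge-coloring into degree-`f` pseudoforests. -/
def PafColoring (ends : E → Sym2 V) (f : V → ℕ) {k : ℕ} (C : E → Fin k) : Prop :=
  ∀ c : Fin k, IsPseudoforest (subEnds ends fun e => C e = c) ∧
    ∀ v, degree (subEnds ends fun e => C e = c) v ≤ f v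

/-- The degree-`f` pseudoarboricity `pa_f(G)`. -/
def paf (ends : E → Sym2 V) (f : V → ℕ) : ℕ :=
  sInf {k | ∃ C : E → Fin k, PafColoring ends f C}

/-- The weighted maximum degree `Δ_f(G) = max_v ⌈d(v)/f(v)⌉`. -/
def fMaxDegree (ends : E → Sym2 V) (f : V → ℕ) : ℕ :=
  Finset.univ.sup fun v => cdiv (degree ends v) (f v)

/-- An edge-coloring into degree-`f` forests. -/
def AfColoring (ends : E → Sym2 V) (f : V → ℕ) {k : ℕ} (C : E → Fin k) : Prop :=
  ∀ c : Fin k, IsForest (subEnds ends fun e => C e = c) ∧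
    ∀ v, degree (subEnds ends fun e => C e = c) v ≤ f v

/-- The degree-`f` arboricity `a_f(G)`. -/
def af (ends : E → Sym2 V) (f : V → ℕ) : ℕ :=
  sInf {k | ∃ C : E → Fin k, AfColoring ends f C}

/-- The arboricity `a(G)`. -/
def arboricity (ends : E → Sym2 V) : ℕ :=
  sInf {k | ∃ C : E → Fin k, ∀ c : Fin k, IsForest (subEnds ends fun e => C e = c)}

/-- The linear arboricity `la(G)`: color classes are linear forests, i.e.
degree-2 forests. -/
def la (ends : E → Sym2 V) : ℕ := af ends fun _ => 2

/-- `G` is `k`-degenerate: every (induced, nonempty) subgraph has a vertex of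
degree at most `k`. -/
def Degenerate (ends : E → Sym2 V) (k : ℕ) : Prop :=
  ∀ S : Finset V, S.Nonempty → ∃ v ∈ S, degreeIn ends S v ≤ k

/-- An `f`-coloring: in each color class every vertex `v` has degree at most `f v`. -/
def FColoring (ends : E → Sym2 V) (f : V → ℕ) {k : ℕ} (C : E → Fin k) : Prop :=
  ∀ c : Fin k, ∀ v, degree (subEnds ends fun e => C e = c) v ≤ f v

/-- The `f`-chromatic index `χ'_f(G)`. -/
def fChromaticIndex (ends : E → Sym2 V) (f : V → ℕ) : ℕ :=
  sInf {k | ∃ C : E → Fin k, FColoring ends f C}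

/-- `G` is bipartite: the vertices can be split into two sides so that every
edge has one endpoint on each side. -/
def Bipartite (ends : E → Sym2 V) : Prop :=
  ∃ P : V → Prop, ∀ e : E, ∃ u v, ends e = s(u, v) ∧ P u ∧ ¬ P v

/-- The list analogue `χ'_{(g,h),ℓ}(G)`: the least `k` such that every list
assignment with lists of size at least `k` admits a coloring from the lists in
which each color class is `(g,h)`-orientable. -/
def ghListChromaticIndex (ends : E → Sym2 V) (g h : V → ℕ∞) : ℕ :=
  sInf {k | ∀ L : E → Finset ℕ, (∀ e, k ≤ (L e).card) →
    ∃ C : E → ℕ, (∀ e, C e ∈ L e) ∧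
      ∀ c : ℕ, GHOrientable (subEnds ends fun e => C e = c) g h}

/-- The list degree-`f` pseudoarboricity `pa_{f,ℓ}(G)`. -/
def pafList (ends : E → Sym2 V) (f : V → ℕ) : ℕ :=
  sInf {k | ∀ L : E → Finset ℕ, (∀ e, k ≤ (L e).card) →
    ∃ C : E → ℕ, (∀ e, C e ∈ L e) ∧
      ∀ c : ℕ, IsPseudoforest (subEnds ends fun e => C e = c) ∧
        ∀ v, degree (subEnds ends fun e => C e = c) v ≤ f v}

/-- The list `f`-chromatic index `χ'_{f,ℓ}(G)`. -/
def fListChromaticIndex (ends : E → Sym2 V) (f : V → ℕ) : ℕ :=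
  sInf {k | ∀ L : E → Finset ℕ, (∀ e, k ≤ (L e).card) →
    ∃ C : E → ℕ, (∀ e, C e ∈ L e) ∧
      ∀ c : ℕ, ∀ v, degree (subEnds ends fun e => C e = c) v ≤ f v}


/-!
Induction on the number of edges. Orienting an edge `e = s(u, v)` as `u → v` and deleting it
leaves `G - e` with `g v` and `h u` lowered by one. The degree condition survives this, and the
density condition survives unless a `g`-tight set (`g(S) ≤ e(S)`) contains `v` but not `u`, or an
`h`-tight set contains `u` but not `v`. If both orientations are blocked, two blocking sets `S`,
`T` conflict. If both are `g`-tight they lie on opposite sides of `e`, and the edge `e` makes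
`e(S) + e(T) < e(S ∪ T) + e(S ∩ T) ≤ g(S ∪ T) + g(S ∩ T) = g(S) + g(T)`. If `S` is `g`-tight and
`T` is `h`-tight they lie on the same side of `e`, and counting edges at `S ∩ T` gives
`e(S) + e(T) < e(S \ T) + e(T \ S) + ∑_{S ∩ T} d ≤ g(S) + h(T)` by the degree condition.
-/

end MG

namespace MG

section Multiplicity

variable {V : Type} [DecidableEq V]

theorem mult_mk (w u v : V) :
    mult w s(u, v) = (if u = w then 1 else 0) + (if v = w then 1 else 0) := rfl

theorem sum_mult_mk (A : Finset V) (u v : V) :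
    ∑ w ∈ A, mult w s(u, v) = (if u ∈ A then 1 else 0) + (if v ∈ A then 1 else 0) := by
  simp [mult_mk, Finset.sum_add_distrib, Finset.sum_ite_eq]

end Multiplicity

section Orientation

variable {V E : Type} [Fintype E] [DecidableEq V] {ends : E → Sym2 V} {D : E → V × V}

theorem degree_eq_inDeg_add_outDeg (hD : IsOrientation ends D) (v : V) :
    degree ends v = inDeg D v + outDeg D v := by
  simp only [degree, inDeg, outDeg, Finset.card_filter, ← Finset.sum_add_distrib]
  refine Finset.sum_congr rfl fun e _ => ?_
  rw [← hD e, mult_mk, add_comm]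

theorem edgesWithin_le_sum_card_fiber [Fintype V] (f : E → V) (hf : ∀ e, f e ∈ ends e)
    (S : Finset V) :
    edgesWithin ends S ≤ ∑ v ∈ S, (Finset.univ.filter fun e => f e = v).card := by
  rw [Finset.sum_card_fiberwise_eq_card_filter]
  exact Finset.card_le_card (Finset.monotone_filter_right _ fun e _ he => he _ (hf e))

end Orientation

section Bounds

variable {V E : Type} [Fintype E] [DecidableEq V]

def DegreeBounded (ends : E → Sym2 V) (g h : V → ℕ∞) : Prop :=
  ∀ v, (degree ends v : ℕ∞) ≤ g v + h v

def DensityBounded [Fintype V] (ends : E → Sym2 V) (f : V → ℕ∞) : Prop :=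
  ∀ S : Finset V, (edgesWithin ends S : ℕ∞) ≤ ∑ v ∈ S, f v

variable {ends : E → Sym2 V} {g h : V → ℕ∞}

theorem GHOrientable.degreeBounded (H : GHOrientable ends g h) : DegreeBounded ends g h := by
  obtain ⟨D, hD, hin, hout⟩ := H
  intro v
  rw [degree_eq_inDeg_add_outDeg hD, Nat.cast_add]
  exact add_le_add (hin v) (hout v)

theorem densityBounded_of_card_fiber_le [Fintype V] (f : E → V) (hf : ∀ e, f e ∈ ends e)
    (c : V → ℕ∞)
    (hc : ∀ v, ((Finset.univ.filter fun e => f e = v).card : ℕ∞) ≤ c v) :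
    DensityBounded ends c := fun S =>
  calc (edgesWithin ends S : ℕ∞)
      ≤ ((∑ v ∈ S, (Finset.univ.filter fun e => f e = v).card : ℕ) : ℕ∞) :=
        Nat.cast_le.mpr (edgesWithin_le_sum_card_fiber f hf S)
    _ ≤ ∑ v ∈ S, c v := by
        rw [Nat.cast_sum]
        exact Finset.sum_le_sum fun v _ => hc v

theorem GHOrientable.densityBounded_left [Fintype V] (H : GHOrientable ends g h) :
    DensityBounded ends g := by
  obtain ⟨D, hD, hin, -⟩ := H
  refine densityBounded_of_card_fiber_le (fun e => (D e).2) (fun e => ?_) g hin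
  rw [← hD e]
  exact Sym2.mem_mk_right _ _

theorem GHOrientable.densityBounded_right [Fintype V] (H : GHOrientable ends g h) :
    DensityBounded ends h := by
  obtain ⟨D, hD, -, hout⟩ := H
  refine densityBounded_of_card_fiber_le (fun e => (D e).1) (fun e => ?_) h hout
  rw [← hD e]
  exact Sym2.mem_mk_left _ _

end Bounds

section Deletion

variable {V E : Type} [Fintype E] [DecidableEq V] (ends : E → Sym2 V) (e0 : E)

theorem card_filter_eq_add_card_filter_subtype_ne (p : E → Prop) [DecidablePred p] :
    (Finset.univ.filter p).card =
      (if p e0 then 1 else 0) + (Finset.univ.filter fun e : {e // e ≠ e0} => p e).card := by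
  simp only [Finset.card_filter]
  exact Fintype.sum_eq_add_sum_subtype_ne _ e0

theorem degree_eq_mult_add_degree_erase (w : V) :
    degree ends w = mult w (ends e0) + degree (subEnds ends (· ≠ e0)) w :=
  Fintype.sum_eq_add_sum_subtype_ne _ e0

theorem edgesWithin_eq_add_edgesWithin_erase [Fintype V] (S : Finset V) :
    edgesWithin ends S =
      (if ∀ w ∈ ends e0, w ∈ S then 1 else 0) + edgesWithin (subEnds ends (· ≠ e0)) S := by
  unfold edgesWithin subEnds
  exact card_filter_eq_add_card_filter_subtype_ne e0 fun e => ∀ w ∈ ends e, w ∈ S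

end Deletion

section Shift

variable {V E : Type} [Fintype E] [DecidableEq V]

-- Lowering `f v` by one is expressed as `f = f' + Pi.single v 1`, which keeps the truncated
-- subtraction of `ℕ∞` out of all statements.
theorem exists_eq_add_single {f : V → ℕ∞} {v : V} (hv : 1 ≤ f v) :
    ∃ f' : V → ℕ∞, f = f' + Pi.single v 1 := by
  refine ⟨Function.update f v (f v - 1), funext fun w => ?_⟩
  rcases eq_or_ne w v with rfl | hw
  · simp [tsub_add_cancel_of_le hv]
  · simp [hw]

theorem cast_ite_eq_single (v w : V) :
    ((if v = w then 1 else 0 : ℕ) : ℕ∞) = (Pi.single v 1 : V → ℕ∞) w := by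
  simp [Pi.single_apply, eq_comm]

variable {ends : E → Sym2 V} {e0 : E} {g h : V → ℕ∞} {u v : V}

theorem GHOrientable.of_erase (he0 : ends e0 = s(u, v))
    (H : GHOrientable (subEnds ends (· ≠ e0)) g h) :
    GHOrientable ends (g + Pi.single v 1) (h + Pi.single u 1) := by
  obtain ⟨D, hD, hin, hout⟩ := H
  let D' : E → V × V := fun e => if he : e = e0 then (u, v) else D ⟨e, he⟩
  have hD' : ∀ e : {e // e ≠ e0}, D' e = D e := fun e => dif_neg e.2
  refine ⟨D', fun e => ?_, fun w => ?_, fun w => ?_⟩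
  · by_cases he : e = e0
    · simp [D', he, he0]
    · simpa [D', he, subEnds] using hD ⟨e, he⟩
  · rw [inDeg, card_filter_eq_add_card_filter_subtype_ne e0]
    simp only [hD', D', dif_pos, Nat.cast_add, cast_ite_eq_single, Pi.add_apply, add_comm (g w)]
    exact add_le_add_right (hin w) _
  · rw [outDeg, card_filter_eq_add_card_filter_subtype_ne e0]
    simp only [hD', D', dif_pos, Nat.cast_add, cast_ite_eq_single, Pi.add_apply, add_comm (h w)]
    exact add_le_add_right (hout w) _

theorem DegreeBounded.erase (H : DegreeBounded ends (g + Pi.single v 1) (h + Pi.single u 1))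
    (he0 : ends e0 = s(u, v)) : DegreeBounded (subEnds ends (· ≠ e0)) g h := by
  intro w
  have hm : ((mult w (ends e0) : ℕ) : ℕ∞) =
      (Pi.single u 1 : V → ℕ∞) w + (Pi.single v 1 : V → ℕ∞) w := by
    simp only [he0, mult_mk, Nat.cast_add, cast_ite_eq_single]
  refine (ENat.add_le_add_iff_right (ENat.natCast_ne_top (mult w (ends e0)))).mp ?_
  calc (degree (subEnds ends (· ≠ e0)) w : ℕ∞) + mult w (ends e0)
      = degree ends w := by rw [degree_eq_mult_add_degree_erase ends e0, Nat.cast_add, add_comm]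
    _ ≤ (g + Pi.single v 1 : V → ℕ∞) w + (h + Pi.single u 1 : V → ℕ∞) w := H w
    _ = g w + h w + mult w (ends e0) := by rw [hm, Pi.add_apply, Pi.add_apply]; ring

theorem DensityBounded.erase [Fintype V] {f : V → ℕ∞} (H : DensityBounded ends f)
    (he0 : ends e0 = s(u, v))
    (hslack : ∀ S, v ∈ S → u ∉ S → (edgesWithin ends S : ℕ∞) < ∑ w ∈ S, f w) :
    ∃ f' : V → ℕ∞, f = f' + Pi.single v 1 ∧ DensityBounded (subEnds ends (· ≠ e0)) f' := by
  have hshift : ∀ S, (edgesWithin (subEnds ends (· ≠ e0)) S : ℕ∞) + (if v ∈ S then 1 else 0) ≤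
      ∑ w ∈ S, f w := by
    intro S
    have hS := H S
    have hsplit := edgesWithin_eq_add_edgesWithin_erase ends e0 S
    simp only [he0, Sym2.forall_mem_pair] at hsplit
    by_cases hv : v ∈ S <;> by_cases hu : u ∈ S <;>
      simp only [hv, hu, and_self, and_false, false_and, if_true, if_false, zero_add,
        add_zero] at hsplit ⊢
    · rwa [hsplit, Nat.cast_add, Nat.cast_one, add_comm] at hS
    · rw [ENat.add_one_le_iff (ENat.natCast_ne_top _), ← hsplit]
      exact hslack S hv hu
    · rwa [hsplit] at hS
    · rwa [hsplit] at hS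
  obtain ⟨f', rfl⟩ := exists_eq_add_single (v := v) (f := f) (by
    simpa using le_add_self.trans (hshift {v}))
  refine ⟨f', rfl, fun S => ?_⟩
  have hS := hshift S
  simp only [Pi.add_apply, Finset.sum_add_distrib, Finset.sum_pi_single'] at hS
  exact (ENat.add_le_add_iff_right (by split_ifs <;> simp)).mp hS

end Shift

section Uncrossing

variable {V E : Type} [Fintype V] [Fintype E] [DecidableEq V] {ends : E → Sym2 V} {e0 : E}
  {u v : V} {S T : Finset V}

theorem edgesWithin_eq_sum (ends : E → Sym2 V) (S : Finset V) :
    edgesWithin ends S = ∑ e, if ∀ w ∈ ends e, w ∈ S then 1 else 0 :=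
  Finset.card_filter _ _

theorem edgesWithin_add_edgesWithin_lt_union_add_inter (he0 : ends e0 = s(u, v)) (huS : u ∈ S)
    (hvS : v ∉ S) (hvT : v ∈ T) (huT : u ∉ T) :
    edgesWithin ends S + edgesWithin ends T <
      edgesWithin ends (S ∪ T) + edgesWithin ends (S ∩ T) := by
  simp only [edgesWithin_eq_sum, ← Finset.sum_add_distrib]
  refine Finset.sum_lt_sum (fun e _ => ?_) ⟨e0, Finset.mem_univ _, ?_⟩
  · generalize ends e = s
    induction s using Sym2.ind with
    | h x y =>
      simp only [Sym2.forall_mem_pair, Finset.mem_union, Finset.mem_inter]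
      split_ifs <;> first | omega | tauto
  · simp [he0, huS, hvS, hvT, huT]

theorem edgesWithin_add_edgesWithin_lt_sum_degree (he0 : ends e0 = s(u, v)) (huS : u ∈ S)
    (hvS : v ∉ S) (huT : u ∈ T) (hvT : v ∉ T) :
    edgesWithin ends S + edgesWithin ends T <
      edgesWithin ends (S \ T) + edgesWithin ends (T \ S) + ∑ w ∈ S ∩ T, degree ends w := by
  simp only [edgesWithin_eq_sum, degree]
  rw [Finset.sum_comm (s := S ∩ T)]
  simp only [← Finset.sum_add_distrib]
  refine Finset.sum_lt_sum (fun e _ => ?_) ⟨e0, Finset.mem_univ _, ?_⟩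
  · generalize ends e = s
    induction s using Sym2.ind with
    | h x y =>
      simp only [sum_mult_mk, Sym2.forall_mem_pair, Finset.mem_sdiff, Finset.mem_inter]
      split_ifs <;> first | omega | tauto
  · simp [he0, sum_mult_mk, huS, hvS, hvT, huT]

variable {g h : V → ℕ∞}

theorem DensityBounded.lt_of_tight (H : DensityBounded ends g) (he0 : ends e0 = s(u, v))
    (huS : u ∈ S) (hvS : v ∉ S) (hvT : v ∈ T) (huT : u ∉ T)
    (hS : ∑ w ∈ S, g w ≤ edgesWithin ends S) : (edgesWithin ends T : ℕ∞) < ∑ w ∈ T, g w := by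
  by_contra! hT
  refine lt_irrefl ((edgesWithin ends S + edgesWithin ends T : ℕ) : ℕ∞) ?_
  calc ((edgesWithin ends S + edgesWithin ends T : ℕ) : ℕ∞)
      < ((edgesWithin ends (S ∪ T) + edgesWithin ends (S ∩ T) : ℕ) : ℕ∞) :=
        Nat.cast_lt.mpr (edgesWithin_add_edgesWithin_lt_union_add_inter he0 huS hvS hvT huT)
    _ ≤ ∑ w ∈ S ∪ T, g w + ∑ w ∈ S ∩ T, g w := by
        rw [Nat.cast_add]
        exact add_le_add (H _) (H _)
    _ = ∑ w ∈ S, g w + ∑ w ∈ T, g w := Finset.sum_union_inter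
    _ ≤ _ := by
        rw [Nat.cast_add]
        exact add_le_add hS hT

theorem DegreeBounded.lt_of_tight (H : DegreeBounded ends g h) (Hg : DensityBounded ends g)
    (Hh : DensityBounded ends h) (he0 : ends e0 = s(u, v))
    (huS : u ∈ S) (hvS : v ∉ S) (huT : u ∈ T) (hvT : v ∉ T)
    (hS : ∑ w ∈ S, g w ≤ edgesWithin ends S) : (edgesWithin ends T : ℕ∞) < ∑ w ∈ T, h w := by
  by_contra! hT
  have hgS := Finset.sum_sdiff (f := g) (Finset.inter_subset_left : S ∩ T ⊆ S)
  have hhT := Finset.sum_sdiff (f := h) (Finset.inter_subset_right : S ∩ T ⊆ T)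
  rw [Finset.sdiff_inter_self_left] at hgS
  rw [Finset.sdiff_inter_self_right] at hhT
  refine lt_irrefl ((edgesWithin ends S + edgesWithin ends T : ℕ) : ℕ∞) ?_
  calc ((edgesWithin ends S + edgesWithin ends T : ℕ) : ℕ∞)
      < ((edgesWithin ends (S \ T) + edgesWithin ends (T \ S) +
          ∑ w ∈ S ∩ T, degree ends w : ℕ) : ℕ∞) :=
        Nat.cast_lt.mpr (edgesWithin_add_edgesWithin_lt_sum_degree he0 huS hvS huT hvT)
    _ ≤ ∑ w ∈ S \ T, g w + ∑ w ∈ T \ S, h w + ∑ w ∈ S ∩ T, (g w + h w) := by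
        push_cast
        exact add_le_add (add_le_add (Hg _) (Hh _)) (Finset.sum_le_sum fun w _ => H w)
    _ = ∑ w ∈ S, g w + ∑ w ∈ T, h w := by
        rw [Finset.sum_add_distrib, ← hgS, ← hhT]
        ring
    _ ≤ _ := by
        rw [Nat.cast_add]
        exact add_le_add hS hT

end Uncrossing

section Induction

variable {V : Type} [Fintype V] [DecidableEq V]

/-- The edge `s(u, v)` can be oriented `u → v`: no `g`-tight set contains the head without the
tail, and no `h`-tight set contains the tail without the head. -/
def CanOrient {E : Type} [Fintype E] (ends : E → Sym2 V) (g h : V → ℕ∞) (u v : V) : Prop :=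
  (∀ S : Finset V, v ∈ S → u ∉ S → (edgesWithin ends S : ℕ∞) < ∑ w ∈ S, g w) ∧
    (∀ S : Finset V, u ∈ S → v ∉ S → (edgesWithin ends S : ℕ∞) < ∑ w ∈ S, h w)

variable {E : Type} [Fintype E] {ends : E → Sym2 V} {g h : V → ℕ∞} {e0 : E} {u v : V}

theorem canOrient_or_canOrient (H : DegreeBounded ends g h) (Hg : DensityBounded ends g)
    (Hh : DensityBounded ends h) (he0 : ends e0 = s(u, v)) :
    CanOrient ends g h u v ∨ CanOrient ends g h v u := by
  by_contra! hcon
  obtain ⟨huv, hvu⟩ := hcon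
  simp only [CanOrient, not_and_or, not_forall, not_lt] at huv hvu
  have he0' : ends e0 = s(v, u) := he0.trans Sym2.eq_swap
  rcases huv with ⟨S, hvS, huS, hS⟩ | ⟨S, huS, hvS, hS⟩ <;>
    rcases hvu with ⟨T, huT, hvT, hT⟩ | ⟨T, hvT, huT, hT⟩
  · exact (Hg.lt_of_tight he0' hvS huS huT hvT hS).not_ge hT
  · exact (H.lt_of_tight Hg Hh he0' hvS huS hvT huT hS).not_ge hT
  · exact (H.lt_of_tight Hg Hh he0 huT hvT huS hvS hT).not_ge hS
  · exact (Hh.lt_of_tight he0 huS hvS hvT huT hS).not_ge hT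

theorem ghOrientable_of_canOrient (H : DegreeBounded ends g h) (Hg : DensityBounded ends g)
    (Hh : DensityBounded ends h) (he0 : ends e0 = s(u, v)) (hcan : CanOrient ends g h u v)
    (ih : ∀ g' h', DegreeBounded (subEnds ends (· ≠ e0)) g' h' →
      DensityBounded (subEnds ends (· ≠ e0)) g' → DensityBounded (subEnds ends (· ≠ e0)) h' →
      GHOrientable (subEnds ends (· ≠ e0)) g' h') :
    GHOrientable ends g h := by
  obtain ⟨g', rfl, hg'⟩ := Hg.erase he0 hcan.1
  obtain ⟨h', rfl, hh'⟩ := Hh.erase (he0.trans Sym2.eq_swap) hcan.2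
  exact (ih g' h' (H.erase he0) hg' hh').of_erase he0

theorem ghOrientable_of_bounded (H : DegreeBounded ends g h) (Hg : DensityBounded ends g)
    (Hh : DensityBounded ends h) : GHOrientable ends g h := by
  induction hn : Fintype.card E generalizing E g h with
  | zero =>
    have : IsEmpty E := Fintype.card_eq_zero_iff.mp hn
    refine ⟨isEmptyElim, isEmptyElim, fun v => ?_, fun v => ?_⟩ <;> simp [inDeg, outDeg]
  | succ n ih =>
    obtain ⟨e0⟩ : Nonempty E := Fintype.card_pos_iff.mp (by omega)
    obtain ⟨⟨u, v⟩, he0⟩ := Quot.exists_rep (ends e0)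
    have ih' g' h' hdeg hg hh :=
      ih (E := {e // e ≠ e0}) (ends := subEnds ends (· ≠ e0)) (g := g') (h := h') hdeg hg hh
        (by simp [hn])
    rcases canOrient_or_canOrient H Hg Hh he0.symm with hcan | hcan
    · exact ghOrientable_of_canOrient H Hg Hh he0.symm hcan ih'
    · exact ghOrientable_of_canOrient H Hg Hh (he0.symm.trans Sym2.eq_swap) hcan ih'

end Induction

/-- Entringer–Tolman: `G` is `(g,h)`-orientable iff
(1) `d(v) ≤ g(v) + h(v)` for every vertex `v`, and
(2) `e(S) ≤ min {g(S), h(S)}` for every vertex subset `S`. -/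
theorem gh_orientable_iff {V E : Type} [Fintype V] [Fintype E] [DecidableEq V]
    (ends : E → Sym2 V) (g h : V → ℕ∞) :
    GHOrientable ends g h ↔
      (∀ v : V, (degree ends v : ℕ∞) ≤ g v + h v) ∧
      (∀ S : Finset V, (edgesWithin ends S : ℕ∞) ≤ min (∑ v ∈ S, g v) (∑ v ∈ S, h v)) := by
  constructor
  · intro H
    exact ⟨H.degreeBounded, fun S => le_min (H.densityBounded_left S) (H.densityBounded_right S)⟩
  · rintro ⟨hdeg, hdens⟩
    exact ghOrientable_of_bounded hdeg (fun S => (hdens S).trans (min_le_left _ _))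
      (fun S => (hdens S).trans (min_le_right _ _))

end MG
end
end

section
/- For every multigraph G, the pseudoarboricity of G equals the maximum over nonempty vertex subsets S of ⌈e(S)/|S|⌉, i.e., pa(G) = max_{S ⊆ V(G), |S| ≥ 1} ⌈e(S)/|S|⌉. -/
/-!
If every vertex set `S` spans at most `k|S|` edges, Hall's theorem assigns to each edge,
injectively, a pair (endpoint, colour); within a colour class distinct edges then get distinct
endpoints, so every component has at most as many edges as vertices.

Conversely, a pseudoforest spans at most `|S|` edges on every `S`: in the component `K` of a
vertex of `S`, connectivity yields an edge for each vertex of `K \ S`, whence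
`e(S ∩ K) ≤ e(K) - |K \ S| ≤ |S ∩ K|`, and induction handles `S \ K`. Summing over the colour
classes of an optimal colouring gives `e(S) ≤ pa(G) |S|`.
-/

open Classical

noncomputable section

namespace MG

variable {V E : Type}

theorem _root_.Relation.ReflTransGen.exists_crossing {α : Type*} {r : α → α → Prop}
    {p : α → Prop} {a b : α} (h : Relation.ReflTransGen r a b) (ha : p a) (hb : ¬ p b) :
    ∃ x y, r x y ∧ p x ∧ ¬ p y := by
  induction h with
  | refl => exact absurd ha hb
  | @tail c d _ hcd ih => by_cases hc : p c; exacts [⟨c, d, hcd, hc, hb⟩, ih hc]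

lemma cdiv_le_iff {a b k : ℕ} (hb : 0 < b) : cdiv a b ≤ k ↔ a ≤ k * b := by
  rw [cdiv, ← Nat.ceilDiv_eq_add_pred_div, ceilDiv_le_iff_le_smul hb, smul_eq_mul, mul_comm]

section Components

variable [Fintype V] {ends : E → Sym2 V}

lemma mem_component_self (v : V) : v ∈ component ends v :=
  Finset.mem_filter.2 ⟨Finset.mem_univ v, .refl⟩

lemma mem_component_of_mem_edge {v x y : V} {e : E} (hx : x ∈ component ends v)
    (hxe : x ∈ ends e) (hye : y ∈ ends e) : y ∈ component ends v := by
  simp only [component, Finset.mem_filter, Finset.mem_univ, true_and] at hx ⊢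
  induction h : ends e using Sym2.ind with
  | h p q =>
    rw [h, Sym2.mem_iff] at hxe hye
    rcases hxe with rfl | rfl <;> rcases hye with rfl | rfl
    exacts [hx, hx.tail ⟨e, h⟩, hx.tail ⟨e, h.trans Sym2.eq_swap⟩, hx]

end Components

variable [Fintype V] [Fintype E] [DecidableEq V]

section EdgesWithin

variable (ends : E → Sym2 V)

@[simp]
lemma edgesWithin_empty : edgesWithin ends ∅ = 0 := by
  simp only [edgesWithin, Finset.card_eq_zero, Finset.filter_eq_empty_iff, Finset.mem_univ,
    Finset.notMem_empty, imp_false, not_forall, not_not, forall_const]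
  exact fun e => Sym2.ind (fun p q => ⟨p, Sym2.mem_mk_left p q⟩) (ends e)

lemma edgesWithin_lt_of_subset {T T' : Finset V} (hTT' : T ⊆ T') (e : E)
    (heT' : ∀ v ∈ ends e, v ∈ T') (heT : ¬ ∀ v ∈ ends e, v ∈ T) :
    edgesWithin ends T < edgesWithin ends T' := by
  refine Finset.card_lt_card ((Finset.ssubset_iff_of_subset fun f hf => ?_).2
    ⟨e, by simpa using heT', by simpa using heT⟩)
  simp only [Finset.mem_filter, Finset.mem_univ, true_and] at hf ⊢
  exact fun v hv => hTT' (hf v hv)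

lemma edgesWithin_le_inter_add_sdiff {K : Finset V}
    (hK : ∀ e, ∀ x ∈ ends e, x ∈ K → ∀ y ∈ ends e, y ∈ K) (S : Finset V) :
    edgesWithin ends S ≤ edgesWithin ends (S ∩ K) + edgesWithin ends (S \ K) := by
  refine (Finset.card_le_card fun e he => ?_).trans (Finset.card_union_le _ _)
  simp only [Finset.mem_union, Finset.mem_filter, Finset.mem_univ, true_and, Finset.mem_inter,
    Finset.mem_sdiff] at he ⊢
  by_cases hcase : ∃ x ∈ ends e, x ∈ K
  · obtain ⟨x, hxe, hxK⟩ := hcase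
    exact Or.inl fun y hy => ⟨he y hy, hK e x hxe hxK y hy⟩
  · push Not at hcase
    exact Or.inr fun y hy => ⟨he y hy, hcase y hy⟩

lemma edgesWithin_le_card_of_injective {head : E → V} (hmem : ∀ e, head e ∈ ends e)
    (hinj : Function.Injective head) (S : Finset V) : edgesWithin ends S ≤ S.card :=
  Finset.card_le_card_of_injOn head (fun e he => by simp_all) hinj.injOn

lemma edgesWithin_subEnds (P : E → Prop) [DecidablePred P] (S : Finset V) :
    edgesWithin (subEnds ends P) S
      = {e ∈ Finset.univ.filter fun e => ∀ v ∈ ends e, v ∈ S | P e}.card := by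
  rw [← Finset.card_subtype, edgesWithin]
  congr 1
  ext e
  rw [Finset.mem_filter]
  simp [subEnds]

end EdgesWithin

/-- Growing `T` to the whole component along edges gains at least one edge per added vertex. -/
lemma edgesWithin_add_card_sdiff_le (ends : E → Sym2 V) {v : V} {T : Finset V} (hv : v ∈ T)
    (hT : T ⊆ component ends v) :
    edgesWithin ends T + (component ends v \ T).card ≤ edgesWithin ends (component ends v) := by
  induction hn : (component ends v \ T).card generalizing T with
  | zero =>
    rw [Finset.card_eq_zero, Finset.sdiff_eq_empty_iff_subset] at hn
    simp [hT.antisymm hn]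
  | succ n ih =>
    obtain ⟨w, hw⟩ : (component ends v \ T).Nonempty := Finset.card_pos.1 (by omega)
    rw [Finset.mem_sdiff] at hw
    have hvw : Reaches ends v w := by simpa [component] using hw.1
    obtain ⟨x, y, ⟨e, he⟩, hxT, hyT⟩ := hvw.exists_crossing (p := (· ∈ T)) hv hw.2
    have hxe : x ∈ ends e := he ▸ Sym2.mem_mk_left x y
    have hye : y ∈ ends e := he ▸ Sym2.mem_mk_right x y
    have hyK : y ∈ component ends v := mem_component_of_mem_edge (hT hxT) hxe hye
    have hgrow : edgesWithin ends T < edgesWithin ends (insert y T) := by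
      refine edgesWithin_lt_of_subset ends (Finset.subset_insert y T) e ?_ fun h => hyT (h y hye)
      rw [he]
      intro u hu
      rcases Sym2.mem_iff.1 hu with rfl | rfl
      exacts [Finset.mem_insert_of_mem hxT, Finset.mem_insert_self u T]
    have hcard : (component ends v \ insert y T).card = n := by
      rw [Finset.sdiff_insert, Finset.card_erase_of_mem (Finset.mem_sdiff.2 ⟨hyK, hyT⟩)]
      omega
    have := ih (Finset.mem_insert_of_mem hv) (Finset.insert_subset hyK hT) hcard
    omega

theorem IsPseudoforest.edgesWithin_le_card {ends : E → Sym2 V} (hpf : IsPseudoforest ends)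
    (S : Finset V) : edgesWithin ends S ≤ S.card := by
  induction S using Finset.strongInduction with
  | H S ih =>
    obtain rfl | ⟨v, hv⟩ := S.eq_empty_or_nonempty
    · simp
    have hsplit := edgesWithin_le_inter_add_sdiff ends
      (fun e x hxe hxK y hye => mem_component_of_mem_edge hxK hxe hye) S (K := component ends v)
    have hin := edgesWithin_add_card_sdiff_le ends (Finset.mem_inter.2 ⟨hv, mem_component_self v⟩)
      Finset.inter_subset_right
    have hout := ih (S \ component ends v) ((Finset.ssubset_iff_of_subset Finset.sdiff_subset).2
      ⟨v, hv, fun h => (Finset.mem_sdiff.1 h).2 (mem_component_self v)⟩)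
    have hK := hpf v
    have hcard_K := Finset.card_sdiff_add_card_eq_card
      (Finset.inter_subset_right (s₁ := S) (s₂ := component ends v))
    have hcard_S := Finset.card_inter_add_card_sdiff S (component ends v)
    omega

lemma isPseudoforest_of_injective {ends : E → Sym2 V} {head : E → V}
    (hmem : ∀ e, head e ∈ ends e) (hinj : Function.Injective head) : IsPseudoforest ends :=
  fun _ => edgesWithin_le_card_of_injective ends hmem hinj _

theorem PaColoring.edgesWithin_le {ends : E → Sym2 V} {k : ℕ} {C : E → Fin k}
    (hC : PaColoring ends C) (S : Finset V) : edgesWithin ends S ≤ k * S.card := by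
  calc edgesWithin ends S
      = ∑ c : Fin k, edgesWithin (subEnds ends fun e => C e = c) S := by
        rw [edgesWithin, Finset.card_eq_sum_card_fiberwise (f := C) (t := Finset.univ)
          (fun e _ => Finset.mem_univ _)]
        simp only [edgesWithin_subEnds]
    _ ≤ ∑ _c : Fin k, S.card := Finset.sum_le_sum fun c _ => (hC c).edgesWithin_le_card S
    _ = k * S.card := by simp

/-- Hall's theorem matches every edge to one of its endpoints together with a color,
injectively; each color class then has an injective choice of endpoint. -/
theorem exists_paColoring_of_edgesWithin_le {ends : E → Sym2 V} {k : ℕ}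
    (hk : ∀ S : Finset V, edgesWithin ends S ≤ k * S.card) :
    ∃ C : E → Fin k, PaColoring ends C := by
  have hall : ∀ A : Finset E,
      A.card ≤ (A.biUnion fun e => (ends e).toFinset ×ˢ (Finset.univ : Finset (Fin k))).card := by
    intro A
    set S := A.biUnion fun e => (ends e).toFinset
    have hAS : A ⊆ Finset.univ.filter fun e => ∀ v ∈ ends e, v ∈ S := fun e he => by
      simpa [S] using fun v hv => ⟨e, he, hv⟩
    have hprod : (A.biUnion fun e => (ends e).toFinset ×ˢ (Finset.univ : Finset (Fin k)))
        = S ×ˢ Finset.univ := by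
      ext; simp [S]
    rw [hprod, Finset.card_product, Finset.card_univ, Fintype.card_fin, mul_comm]
    exact (Finset.card_le_card hAS).trans (hk S)
  obtain ⟨f, hfinj, hf⟩ := (Finset.all_card_le_biUnion_card_iff_exists_injective _).1 hall
  refine ⟨fun e => (f e).2, fun c => isPseudoforest_of_injective (head := fun e => (f e.1).1)
    (fun e => Sym2.mem_toFinset.1 (Finset.mem_product.1 (hf e.1)).1) fun e e' hee' => ?_⟩
  exact Subtype.ext (hfinj (Prod.ext hee' (e.2.trans e'.2.symm)))

theorem exists_paColoring_iff (ends : E → Sym2 V) (k : ℕ) :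
    (∃ C : E → Fin k, PaColoring ends C) ↔ ∀ S : Finset V, edgesWithin ends S ≤ k * S.card :=
  ⟨fun ⟨_, hC⟩ => hC.edgesWithin_le, exists_paColoring_of_edgesWithin_le⟩

lemma sup_cdiv_edgesWithin_le_iff (ends : E → Sym2 V) (k : ℕ) :
    (Finset.univ.filter fun S : Finset V => S.Nonempty).sup
        (fun S => cdiv (edgesWithin ends S) S.card) ≤ k ↔
      ∀ S : Finset V, edgesWithin ends S ≤ k * S.card := by
  simp only [Finset.sup_le_iff, Finset.mem_filter, Finset.mem_univ, true_and]
  refine forall_congr' fun S => ?_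
  obtain rfl | hS := S.eq_empty_or_nonempty
  · simp
  · simp [hS, cdiv_le_iff hS.card_pos]

/-- Hakimi's theorem: for every multigraph `G`,
`pa(G) = max_{S ⊆ V(G), |S| ≥ 1} ⌈e(S)/|S|⌉`. -/
theorem pa_eq_maxDensity {V E : Type} [Fintype V] [Fintype E] [DecidableEq V]
    (ends : E → Sym2 V) :
    pa ends = (Finset.univ.filter fun S : Finset V => S.Nonempty).sup
      (fun S => cdiv (edgesWithin ends S) S.card) := by
  have hpa : {k | ∃ C : E → Fin k, PaColoring ends C} = Set.Ici
      ((Finset.univ.filter fun S : Finset V => S.Nonempty).sup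
        (fun S => cdiv (edgesWithin ends S) S.card)) := by
    ext k
    rw [Set.mem_ofPred_eq, exists_paColoring_iff, Set.mem_Ici, sup_cdiv_edgesWithin_le_iff]
  rw [pa, hpa, csInf_Ici]

end MG
end
end
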